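/- arXiv:1312.1632 — 6 statements merged into one kernel-verified Lean document; each statement's English description precedes it below -/
import Mathlib

section
/- Let n ≥ 2, let L be a symmetric positive-semidefinite n×n real matrix with L·1 = 0 and kernel exactly the span of the all-ones vector 1, and let λ̲ > 0 denote its smallest nonzero eigenvalue. Let α > 0, σ ≥ 0, μ₀ ∈ ℝ, m₀ ∈ ℝ^n, and let S₀ be a symmetric positive-semidefinite n×n matrix. Define for t ≥ 0: μ_w(t) = exp(−(L+αI)t)·m₀ + (I − exp(−(L+αI)t))·μ₀·1 and Σ_w(t) = exp(−(L+αI)t)·S₀·exp(−(L+αI)t) + (σ²/2)·(L+αI)^{-1}·(I − exp(−2(L+αI)t)). Set C̃ = λ_max(S₀) − σ²/(2(λ̲+α)) + ‖m₀‖² and C̄ = (1/n²)·1ᵀS₀1 − σ²/(2αn) + ((1/n)·⟨1, m₀⟩ − μ₀)². Then for all t ≥ 0: (1/n)·( trace(Σ_w(t)) + ‖μ_w(t) − μ₀·1‖² ) ≤ C̃·e^{−2(λ̲+α)t} + C̄·e^{−2αt} + (σ²/2)·( 1/(λ̲+α) + 1/(αn) ). -/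
/-!
Diagonalise `L` in an orthonormal eigenbasis. In that basis the Ornstein–Uhlenbeck mean and
covariance decouple: mode `i` relaxes at rate `λᵢ + α`, and its contribution to the
mean-squared error is `ouModeError (σ²/2) t (λᵢ + α) yᵢ`, where `yᵢ` is its initial second moment.
Since `ker L` is spanned by `1`, exactly one mode has `λᵢ = 0`; its eigenvector is `1/√n`, and
it produces the `C̄ e^{-2αt}` and `σ²/(2αn)` terms. Every other mode has `λᵢ ≥ λ̲`, so it decays at
least as fast as a mode of rate `λ̲ + α`, and their initial second moments add up to at most
`trace S₀ + ‖m₀‖² ≤ n λ_max(S₀) + ‖m₀‖²`.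
-/

open Matrix

/-- Secant slopes of the convex function `exp` through `0` increase. -/
theorem inv_mul_one_sub_exp_neg_mul_le {s a b : ℝ} (hs : 0 ≤ s) (ha : 0 < a) (hab : a ≤ b) :
    b⁻¹ * (1 - Real.exp (-s * b)) ≤ a⁻¹ * (1 - Real.exp (-s * a)) := by
  rcases hs.eq_or_lt with rfl | hs
  · simp
  have hb : 0 < b := ha.trans_le hab
  have key := convexOn_exp.secant_mono (a := 0) (x := -s * b) (y := -s * a) trivial trivial
    trivial (by nlinarith) (by nlinarith) (by nlinarith)
  rw [Real.exp_zero, sub_zero, sub_zero] at key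
  have e1 : b⁻¹ * (1 - Real.exp (-s * b)) = s * ((Real.exp (-s * b) - 1) / (-s * b)) := by
    field_simp; ring
  have e2 : a⁻¹ * (1 - Real.exp (-s * a)) = s * ((Real.exp (-s * a) - 1) / (-s * a)) := by
    field_simp; ring
  rw [e1, e2]
  exact mul_le_mul_of_nonneg_left key hs.le

/-- Mean-squared error at time `t` of a scalar Ornstein–Uhlenbeck mode `dx = -a x dt + σ dB`
with `κ = σ²/2` and initial second moment `y`. -/
noncomputable def ouModeError (κ t a y : ℝ) : ℝ :=
  Real.exp (-(2 * t) * a) * y + κ * (a⁻¹ * (1 - Real.exp (-(2 * t) * a)))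

theorem ouModeError_eq (κ t a y : ℝ) :
    ouModeError κ t a y = κ / a + Real.exp (-(2 * t) * a) * (y - κ / a) := by
  unfold ouModeError
  ring

theorem ouModeError_nonneg {κ t a y : ℝ} (ht : 0 ≤ t) (ha : 0 < a) (hκ : 0 ≤ κ) (hy : 0 ≤ y) :
    0 ≤ ouModeError κ t a y := by
  have : Real.exp (-(2 * t) * a) ≤ 1 := Real.exp_le_one_iff.mpr (by nlinarith)
  unfold ouModeError
  positivity

theorem ouModeError_le_of_le {κ t a b y : ℝ} (ht : 0 ≤ t) (ha : 0 < a) (hab : a ≤ b)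
    (hκ : 0 ≤ κ) (hy : 0 ≤ y) : ouModeError κ t b y ≤ ouModeError κ t a y := by
  have hexp : Real.exp (-(2 * t) * b) ≤ Real.exp (-(2 * t) * a) :=
    Real.exp_le_exp.mpr (by nlinarith)
  have hinv := inv_mul_one_sub_exp_neg_mul_le (by positivity : 0 ≤ 2 * t) ha hab
  unfold ouModeError
  linarith [mul_le_mul_of_nonneg_right hexp hy, mul_le_mul_of_nonneg_left hinv hκ]

namespace Matrix

variable {ι : Type*} [Fintype ι]

theorem const_dotProduct_mulVec_const_add_sq {c : ℝ} (hc : Fintype.card ι * c ^ 2 = 1)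
    (S : Matrix ι ι ℝ) (m : ι → ℝ) (μ : ℝ) :
    (fun _ => c) ⬝ᵥ (S *ᵥ fun _ => c) + ((fun _ => c) ⬝ᵥ (m - fun _ => μ)) ^ 2
      = 1 / Fintype.card ι * ((fun _ => 1) ⬝ᵥ (S *ᵥ fun _ => 1))
        + Fintype.card ι * (1 / Fintype.card ι * ∑ i, m i - μ) ^ 2 := by
  have hcard : (Fintype.card ι : ℝ) ≠ 0 := by rintro h; simp [h] at hc
  have hconst : (fun _ => c : ι → ℝ) = c • fun _ => 1 := by ext; simp
  have hsum : (fun _ => c) ⬝ᵥ (m - fun _ => μ) = c * (∑ i, m i - Fintype.card ι * μ) := by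
    simp [dotProduct, Finset.mul_sum, mul_sub]
    ring
  rw [hsum, hconst, mulVec_smul, smul_dotProduct, dotProduct_smul, smul_eq_mul, smul_eq_mul,
    ← mul_assoc, ← sq, mul_pow, eq_inv_of_mul_eq_one_right hc]
  field_simp

variable [DecidableEq ι]

section UnitaryConj

variable {U : Matrix ι ι ℝ} (hU : U ∈ unitaryGroup ι ℝ)
include hU

theorem one_eq_conj_diagonal_one : (1 : Matrix ι ι ℝ) = U * diagonal 1 * star U := by
  rw [diagonal_one', mul_one, Unitary.mul_star_self_of_mem hU]

theorem conj_diagonal_mul_conj_diagonal (f g : ι → ℝ) :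
    U * diagonal f * star U * (U * diagonal g * star U)
      = U * diagonal (fun i => f i * g i) * star U := by
  rw [← diagonal_mul_diagonal]
  simp only [mul_assoc, ← mul_assoc (star U) U, Unitary.star_mul_self_of_mem hU, one_mul]

theorem inv_conj_diagonal {f : ι → ℝ} (hf : ∀ i, f i ≠ 0) :
    (U * diagonal f * star U)⁻¹ = U * diagonal f⁻¹ * star U := by
  refine inv_eq_right_inv ?_
  rw [conj_diagonal_mul_conj_diagonal hU, one_eq_conj_diagonal_one hU]
  congr
  funext i
  exact mul_inv_cancel₀ (hf i)

theorem exp_smul_conj_diagonal (s : ℝ) (f : ι → ℝ) :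
    NormedSpace.exp (s • (U * diagonal f * star U))
      = U * diagonal (fun i => Real.exp (s * f i)) * star U := by
  let V : (Matrix ι ι ℝ)ˣ :=
    ⟨U, star U, Unitary.mul_star_self_of_mem hU, Unitary.star_mul_self_of_mem hU⟩
  rw [← Matrix.smul_mul, ← Matrix.mul_smul, ← diagonal_smul]
  refine (exp_units_conj V _).trans ?_
  rw [exp_diagonal, Pi.exp_def]
  simp only [Pi.smul_apply, smul_eq_mul, Real.exp_eq_exp_ℝ]
  rfl

theorem conj_diagonal_add_smul_one (f : ι → ℝ) (c : ℝ) :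
    U * diagonal f * star U + c • 1 = U * diagonal (fun i => f i + c) * star U := by
  have h : diagonal (fun i => f i + c) = diagonal f + c • diagonal 1 := by
    rw [← diagonal_smul, diagonal_add]
    simp
  rw [h, Matrix.mul_add, Matrix.add_mul, Matrix.mul_smul, Matrix.smul_mul,
    ← one_eq_conj_diagonal_one hU]

theorem trace_star_mul_mul (S : Matrix ι ι ℝ) : (star U * S * U).trace = S.trace := by
  rw [trace_mul_cycle, Unitary.mul_star_self_of_mem hU, one_mul]

theorem trace_conj_diagonal (f : ι → ℝ) : (U * diagonal f * star U).trace = ∑ i, f i := by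
  rw [trace_mul_cycle, Unitary.star_mul_self_of_mem hU, one_mul, trace_diagonal]

theorem trace_conj_diagonal_mul_mul_conj_diagonal (f g : ι → ℝ) (S : Matrix ι ι ℝ) :
    (U * diagonal f * star U * S * (U * diagonal g * star U)).trace
      = ∑ i, g i * f i * (star U * S * U) i i := by
  rw [trace_mul_cycle, conj_diagonal_mul_conj_diagonal hU, mul_assoc, trace_mul_cycle]
  simp [trace, mul_diagonal, mul_comm]

theorem sum_sq_star_mulVec (v : ι → ℝ) : ∑ i, (star U *ᵥ v) i ^ 2 = ∑ i, v i ^ 2 := by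
  have h : (star U *ᵥ v) ⬝ᵥ (star U *ᵥ v) = v ⬝ᵥ v := by
    rw [dotProduct_mulVec, ← mulVec_transpose, mulVec_mulVec, star_eq_conjTranspose,
      conjTranspose_eq_transpose_of_trivial, transpose_transpose,
      ← conjTranspose_eq_transpose_of_trivial, ← star_eq_conjTranspose,
      Unitary.mul_star_self_of_mem hU, one_mulVec]
  simpa only [dotProduct, sq] using h

theorem sum_sq_conj_diagonal_mulVec (f v : ι → ℝ) :
    ∑ i, ((U * diagonal f * star U) *ᵥ v) i ^ 2 = ∑ i, f i ^ 2 * (star U *ᵥ v) i ^ 2 := by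
  rw [← mulVec_mulVec, ← mulVec_mulVec]
  have := sum_sq_star_mulVec (Unitary.star_mem hU) (diagonal f *ᵥ star U *ᵥ v)
  rw [star_star] at this
  rw [this]
  simp [mulVec_diagonal, mul_pow]

theorem sum_ouModeError_star_mul_mul_add_sq (κ t a : ℝ) (S : Matrix ι ι ℝ) (m : ι → ℝ) :
    ∑ i, ouModeError κ t a ((star U * S * U) i i + (star U *ᵥ m) i ^ 2)
      = Real.exp (-(2 * t) * a) * (S.trace + ∑ i, m i ^ 2)
        + Fintype.card ι * ouModeError κ t a 0 := by
  rw [← trace_star_mul_mul hU S]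
  simp only [ouModeError, Finset.sum_add_distrib, ← Finset.mul_sum, sum_sq_star_mulVec hU,
    Finset.sum_const, Finset.card_univ, nsmul_eq_mul, trace, diag]
  ring

variable {A : Matrix ι ι ℝ} {a : ι → ℝ} (hA : A = U * diagonal a * star U)
include hA

theorem trace_ouCovariance (ha : ∀ i, a i ≠ 0) (S : Matrix ι ι ℝ) (κ t : ℝ) :
    (NormedSpace.exp ((-t) • A) * S * NormedSpace.exp ((-t) • A)
        + κ • (A⁻¹ * (1 - NormedSpace.exp ((-(2 * t)) • A)))).trace
      = ∑ i, (Real.exp (-(2 * t) * a i) * (star U * S * U) i i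
          + κ * ((a i)⁻¹ * (1 - Real.exp (-(2 * t) * a i)))) := by
  rw [hA, exp_smul_conj_diagonal hU, exp_smul_conj_diagonal hU, inv_conj_diagonal hU ha,
    one_eq_conj_diagonal_one hU, ← Matrix.sub_mul, ← Matrix.mul_sub, diagonal_sub,
    conj_diagonal_mul_conj_diagonal hU, trace_add, trace_smul,
    trace_conj_diagonal_mul_mul_conj_diagonal hU, trace_conj_diagonal hU, smul_eq_mul,
    Finset.mul_sum, ← Finset.sum_add_distrib]
  refine Finset.sum_congr rfl fun i _ => ?_
  rw [← Real.exp_add]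
  congr 3
  ring

theorem sum_sq_ouMean_sub (m : ι → ℝ) (μ t : ℝ) :
    ∑ j, ((NormedSpace.exp ((-t) • A) *ᵥ m
        + (1 - NormedSpace.exp ((-t) • A)) *ᵥ (fun _ => μ) : ι → ℝ) j - μ) ^ 2
      = ∑ i, Real.exp (-(2 * t) * a i) * (star U *ᵥ (m - fun _ => μ)) i ^ 2 := by
  have h (j) : (NormedSpace.exp ((-t) • A) *ᵥ m
      + (1 - NormedSpace.exp ((-t) • A)) *ᵥ (fun _ => μ) : ι → ℝ) j - μ
        = (NormedSpace.exp ((-t) • A) *ᵥ (m - fun _ => μ)) j := by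
    simp only [Pi.add_apply, sub_mulVec, one_mulVec, mulVec_sub, Pi.sub_apply]
    ring
  simp_rw [h, hA, exp_smul_conj_diagonal hU, sum_sq_conj_diagonal_mulVec hU, ← Real.exp_nat_mul]
  refine Finset.sum_congr rfl fun i _ => ?_
  congr 2
  push_cast
  ring

theorem trace_ouCovariance_add_sum_sq_ouMean_sub (ha : ∀ i, a i ≠ 0) (S : Matrix ι ι ℝ)
    (m : ι → ℝ) (κ μ t : ℝ) :
    (NormedSpace.exp ((-t) • A) * S * NormedSpace.exp ((-t) • A)
        + κ • (A⁻¹ * (1 - NormedSpace.exp ((-(2 * t)) • A)))).trace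
      + ∑ j, ((NormedSpace.exp ((-t) • A) *ᵥ m
        + (1 - NormedSpace.exp ((-t) • A)) *ᵥ (fun _ => μ) : ι → ℝ) j - μ) ^ 2
      = ∑ i, ouModeError κ t (a i)
          ((star U * S * U) i i + (star U *ᵥ (m - fun _ => μ)) i ^ 2) := by
  rw [trace_ouCovariance hU hA ha, sum_sq_ouMean_sub hU hA, ← Finset.sum_add_distrib]
  refine Finset.sum_congr rfl fun i _ => ?_
  unfold ouModeError
  ring

end UnitaryConj

namespace IsHermitian

variable {L : Matrix ι ι ℝ}

theorem coe_eigenvectorBasis_ne_zero (hL : L.IsHermitian) (i : ι) :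
    ⇑(hL.eigenvectorBasis i) ≠ 0 := fun h =>
  hL.eigenvectorBasis.orthonormal.ne_zero i (by simpa using h)

theorem trace_le_card_mul (hL : L.IsHermitian) {c : ℝ}
    (hc : ∀ (μ : ℝ) (v : ι → ℝ), v ≠ 0 → L *ᵥ v = μ • v → μ ≤ c) :
    L.trace ≤ Fintype.card ι * c := by
  rw [hL.trace_eq_sum_eigenvalues]
  have h : ∀ i, hL.eigenvalues i ≤ c := fun i =>
    hc _ _ (hL.coe_eigenvectorBasis_ne_zero i) (hL.mulVec_eigenvectorBasis i)
  simpa using Finset.sum_le_sum fun i (_ : i ∈ Finset.univ) => h i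

variable (hL : L.IsHermitian)

theorem add_smul_one_eq_conj_diagonal (c : ℝ) :
    L + c • 1 = hL.eigenvectorUnitary * diagonal (fun i => hL.eigenvalues i + c)
      * star (hL.eigenvectorUnitary : Matrix ι ι ℝ) := by
  rw [← conj_diagonal_add_smul_one hL.eigenvectorUnitary.2]
  conv_lhs => rw [hL.spectral_theorem]
  simp

theorem star_eigenvectorUnitary_mulVec_apply (v : ι → ℝ) (i : ι) :
    (star (hL.eigenvectorUnitary : Matrix ι ι ℝ) *ᵥ v) i = ⇑(hL.eigenvectorBasis i) ⬝ᵥ v := by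
  simp [mulVec, dotProduct, star_apply]

theorem star_eigenvectorUnitary_mul_mul_apply (S : Matrix ι ι ℝ) (i : ι) :
    (star (hL.eigenvectorUnitary : Matrix ι ι ℝ) * S * hL.eigenvectorUnitary) i i
      = ⇑(hL.eigenvectorBasis i) ⬝ᵥ (S *ᵥ ⇑(hL.eigenvectorBasis i)) := by
  simp only [mul_apply, star_apply, eigenvectorUnitary_apply, star_trivial, dotProduct, mulVec,
    Finset.sum_mul, Finset.mul_sum]
  rw [Finset.sum_comm]
  exact Finset.sum_congr rfl fun j _ => Finset.sum_congr rfl fun k _ => by ring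

theorem eigenvectorBasis_dotProduct (i j : ι) :
    ⇑(hL.eigenvectorBasis i) ⬝ᵥ ⇑(hL.eigenvectorBasis j) = if i = j then 1 else 0 := by
  rw [dotProduct_comm, ← orthonormal_iff_ite.mp hL.eigenvectorBasis.orthonormal i j]
  simp [EuclideanSpace.inner_eq_star_dotProduct]

theorem eigenvalue_mul_eigenvectorBasis_dotProduct_eq_zero {v : ι → ℝ} (hv : L *ᵥ v = 0)
    (i : ι) : hL.eigenvalues i * (⇑(hL.eigenvectorBasis i) ⬝ᵥ v) = 0 := by
  rw [← smul_eq_mul, ← smul_dotProduct, ← mulVec_eigenvectorBasis, ← vecMul_transpose,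
    ← dotProduct_mulVec, (isHermitian_iff_isSymm.mp hL).eq, hv, dotProduct_zero]

theorem exists_eigenvectorBasis_eq_const [Nonempty ι] (hL1 : L *ᵥ (fun _ => 1) = 0)
    (hker : ∀ v : ι → ℝ, L *ᵥ v = 0 → ∃ c : ℝ, v = fun _ => c) :
    ∃ i₀ c, ⇑(hL.eigenvectorBasis i₀) = (fun _ => c) ∧ Fintype.card ι * c ^ 2 = 1 ∧
      hL.eigenvalues i₀ = 0 ∧
      ∀ i ≠ i₀, hL.eigenvalues i ≠ 0 ∧ ⇑(hL.eigenvectorBasis i) ⬝ᵥ (fun _ => 1) = 0 := by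
  have hconst (i) (hi : hL.eigenvalues i = 0) :
      ∃ c : ℝ, ⇑(hL.eigenvectorBasis i) = fun _ => c :=
    hker _ (by rw [mulVec_eigenvectorBasis, hi, zero_smul])
  have hnorm (i) (c : ℝ) (hc : ⇑(hL.eigenvectorBasis i) = fun _ => c) :
      Fintype.card ι * c ^ 2 = 1 := by
    simpa [hc, dotProduct, sq] using hL.eigenvectorBasis_dotProduct i i
  obtain ⟨i₀, hi₀⟩ : ∃ i₀, ⇑(hL.eigenvectorBasis i₀) ⬝ᵥ (fun _ => 1) ≠ 0 := by
    by_contra! h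
    have := sum_sq_star_mulVec hL.eigenvectorUnitary.2 (fun _ => 1)
    simp only [star_eigenvectorUnitary_mulVec_apply, h] at this
    simp [eq_comm, Fintype.card_ne_zero] at this
  have hd₀ : hL.eigenvalues i₀ = 0 := (mul_eq_zero.mp
    (hL.eigenvalue_mul_eigenvectorBasis_dotProduct_eq_zero hL1 i₀)).resolve_right hi₀
  obtain ⟨c, hc⟩ := hconst i₀ hd₀
  have hc0 : c ≠ 0 := by rintro rfl; simpa using hnorm i₀ 0 hc
  refine ⟨i₀, c, hc, hnorm i₀ c hc, hd₀, fun i hi => ?_⟩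
  have horth : ⇑(hL.eigenvectorBasis i) ⬝ᵥ (fun _ => 1) = 0 := by
    have := hL.eigenvectorBasis_dotProduct i i₀
    rw [if_neg hi, hc] at this
    have hmul : c * (⇑(hL.eigenvectorBasis i) ⬝ᵥ fun _ => 1) = 0 := by
      simpa [dotProduct, Finset.mul_sum, mul_comm] using this
    exact (mul_eq_zero.mp hmul).resolve_left hc0
  refine ⟨fun hd => ?_, horth⟩
  obtain ⟨c', hc'⟩ := hconst i hd
  have hsum : Fintype.card ι * c' = 0 := by simpa [hc', dotProduct] using horth
  have := hnorm i c' hc'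
  rw [sq, ← mul_assoc, hsum, zero_mul] at this
  exact zero_ne_one this

theorem sum_erase_ouModeError_le {S : Matrix ι ι ℝ} (hS : S.PosSemidef) {i₀ : ι}
    {lam α κ t μ : ℝ} (m : ι → ℝ) (ht : 0 ≤ t) (hκ : 0 ≤ κ) (hlamα : 0 < lam + α)
    (hlam : ∀ i ≠ i₀, lam ≤ hL.eigenvalues i)
    (horth : ∀ i ≠ i₀, ⇑(hL.eigenvectorBasis i) ⬝ᵥ (fun _ => 1) = 0) :
    ∑ i ∈ Finset.univ.erase i₀, ouModeError κ t (hL.eigenvalues i + α)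
        ((star (hL.eigenvectorUnitary : Matrix ι ι ℝ) * S * hL.eigenvectorUnitary) i i
          + (star (hL.eigenvectorUnitary : Matrix ι ι ℝ) *ᵥ (m - fun _ => μ)) i ^ 2)
      ≤ Real.exp (-(2 * t) * (lam + α)) * (S.trace + ∑ i, m i ^ 2)
        + Fintype.card ι * ouModeError κ t (lam + α) 0 := by
  have hM (i) :
      0 ≤ (star (hL.eigenvectorUnitary : Matrix ι ι ℝ) * S * hL.eigenvectorUnitary) i i :=
    (hS.conjTranspose_mul_mul_same _).diag_nonneg
  have hx (i) (hi : i ≠ i₀) :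
      (star (hL.eigenvectorUnitary : Matrix ι ι ℝ) *ᵥ (m - fun _ => μ)) i
        = (star (hL.eigenvectorUnitary : Matrix ι ι ℝ) *ᵥ m) i := by
    have : (fun _ => μ : ι → ℝ) = μ • fun _ => 1 := by ext; simp
    rw [mulVec_sub, Pi.sub_apply, hL.star_eigenvectorUnitary_mulVec_apply (fun _ => μ), this,
      dotProduct_smul, horth i hi, smul_zero, sub_zero]
  rw [← sum_ouModeError_star_mul_mul_add_sq hL.eigenvectorUnitary.2]
  refine (Finset.sum_le_sum fun i hi => ?_).trans
    (Finset.sum_le_sum_of_subset_of_nonneg (Finset.erase_subset _ _) fun i _ _ => ?_)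
  · have hi := Finset.ne_of_mem_erase hi
    rw [hx i hi]
    exact ouModeError_le_of_le ht hlamα (by linarith [hlam i hi]) hκ
      (add_nonneg (hM i) (sq_nonneg _))
  · exact ouModeError_nonneg ht hlamα hκ (add_nonneg (hM i) (sq_nonneg _))

end IsHermitian

theorem trace_ouCovariance_add_sum_sq_ouMean_sub_le [Nonempty ι] {L S : Matrix ι ι ℝ}
    (hL : L.PosSemidef) (hL1 : L *ᵥ (fun _ => 1) = 0)
    (hker : ∀ v : ι → ℝ, L *ᵥ v = 0 → ∃ c : ℝ, v = fun _ => c) {lam : ℝ}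
    (hlam : ∀ c : ℝ, (∃ v : ι → ℝ, v ≠ 0 ∧ L *ᵥ v = c • v) → c = 0 ∨ lam ≤ c)
    (hS : S.PosSemidef) {lmax : ℝ}
    (hlmax : ∀ (c : ℝ) (v : ι → ℝ), v ≠ 0 → S *ᵥ v = c • v → c ≤ lmax)
    {α κ t : ℝ} (hα : 0 < α) (hlamα : 0 < lam + α) (hκ : 0 ≤ κ) (ht : 0 ≤ t)
    (m : ι → ℝ) (μ : ℝ) :
    (NormedSpace.exp ((-t) • (L + α • 1)) * S * NormedSpace.exp ((-t) • (L + α • 1))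
        + κ • ((L + α • 1)⁻¹ * (1 - NormedSpace.exp ((-(2 * t)) • (L + α • 1))))).trace
      + ∑ j, ((NormedSpace.exp ((-t) • (L + α • 1)) *ᵥ m
        + (1 - NormedSpace.exp ((-t) • (L + α • 1))) *ᵥ (fun _ => μ) : ι → ℝ) j - μ) ^ 2
      ≤ ouModeError κ t α (1 / Fintype.card ι * ((fun _ => 1) ⬝ᵥ (S *ᵥ fun _ => 1))
          + Fintype.card ι * (1 / Fintype.card ι * ∑ i, m i - μ) ^ 2)
        + Real.exp (-(2 * t) * (lam + α)) * (Fintype.card ι * lmax + ∑ i, m i ^ 2)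
        + Fintype.card ι * ouModeError κ t (lam + α) 0 := by
  obtain ⟨i₀, c, hc, hcn, hd₀, hrest⟩ := hL.1.exists_eigenvectorBasis_eq_const hL1 hker
  have hlam_le (i) (hi : i ≠ i₀) : lam ≤ hL.1.eigenvalues i := (hlam _ ⟨_,
    hL.1.coe_eigenvectorBasis_ne_zero i, hL.1.mulVec_eigenvectorBasis i⟩).resolve_left
      (hrest i hi).1
  have hpos (i) : hL.1.eigenvalues i + α ≠ 0 := by linarith [hL.eigenvalues_nonneg i]
  rw [trace_ouCovariance_add_sum_sq_ouMean_sub hL.1.eigenvectorUnitary.2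
    (hL.1.add_smul_one_eq_conj_diagonal α) hpos, ← Finset.add_sum_erase _ _ (Finset.mem_univ i₀),
    hL.1.star_eigenvectorUnitary_mul_mul_apply, hL.1.star_eigenvectorUnitary_mulVec_apply, hc,
    const_dotProduct_mulVec_const_add_sq hcn, hd₀, zero_add, add_assoc]
  refine add_le_add le_rfl ((hL.1.sum_erase_ouModeError_le hS m ht hκ hlamα hlam_le
    fun i hi => (hrest i hi).2).trans ?_)
  gcongr
  exact hS.1.trace_le_card_mul hlmax

end Matrix

theorem network_convergence_bound_general
    (n : ℕ) (hn : 2 ≤ n) (L S₀ : Matrix (Fin n) (Fin n) ℝ)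
    (hLpsd : L.PosSemidef)
    (hL1 : L *ᵥ (fun _ => (1 : ℝ)) = 0)
    (hker : ∀ v : Fin n → ℝ, L *ᵥ v = 0 → ∃ c : ℝ, v = fun _ => c)
    (lam : ℝ) (hlam : 0 < lam)
    (hlam_min : ∀ c : ℝ, (∃ v : Fin n → ℝ, v ≠ 0 ∧ L *ᵥ v = c • v) → c = 0 ∨ lam ≤ c)
    (α σ μ₀ : ℝ) (hα : 0 < α) (m₀ : Fin n → ℝ)
    (hS₀ : S₀.PosSemidef)
    (lmax : ℝ)
    (hlmax : ∀ (c : ℝ) (v : Fin n → ℝ), v ≠ 0 → S₀ *ᵥ v = c • v → c ≤ lmax)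
    (μw : ℝ → Fin n → ℝ) (Sw : ℝ → Matrix (Fin n) (Fin n) ℝ)
    (hμw : ∀ t : ℝ, μw t = NormedSpace.exp ((-t) • (L + α • 1)) *ᵥ m₀
        + (1 - NormedSpace.exp ((-t) • (L + α • 1))) *ᵥ (fun _ => μ₀))
    (hSw : ∀ t : ℝ, Sw t
        = NormedSpace.exp ((-t) • (L + α • 1)) * S₀ * NormedSpace.exp ((-t) • (L + α • 1))
          + (σ ^ 2 / 2) • ((L + α • 1)⁻¹
              * (1 - NormedSpace.exp ((-(2 * t)) • (L + α • 1)))))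
    (Ct Cb : ℝ)
    (hCt : Ct = lmax - σ ^ 2 / (2 * (lam + α)) + ∑ i, (m₀ i) ^ 2)
    (hCb : Cb = (1 / (n : ℝ) ^ 2) * ((fun _ => (1 : ℝ)) ⬝ᵥ (S₀ *ᵥ fun _ => (1 : ℝ)))
        - σ ^ 2 / (2 * α * n) + ((1 / (n : ℝ)) * (∑ i, m₀ i) - μ₀) ^ 2) :
    ∀ t : ℝ, 0 ≤ t →
      (1 / (n : ℝ)) * ((Sw t).trace + ∑ i, (μw t i - μ₀) ^ 2)
        ≤ Ct * Real.exp (-2 * (lam + α) * t) + Cb * Real.exp (-2 * α * t)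
          + σ ^ 2 / 2 * (1 / (lam + α) + 1 / (α * n)) := by
  intro t ht
  have : Nonempty (Fin n) := ⟨⟨0, by omega⟩⟩
  have hbound := trace_ouCovariance_add_sum_sq_ouMean_sub_le hLpsd hL1 hker hlam_min hS₀ hlmax
    hα (by linarith) (by positivity : 0 ≤ σ ^ 2 / 2) ht m₀ μ₀
  simp only [Fintype.card_fin] at hbound
  rw [hSw, hμw]
  refine (mul_le_mul_of_nonneg_left hbound (by positivity)).trans ?_
  have hy₀ : 1 / (n : ℝ) * ((fun _ => 1) ⬝ᵥ (S₀ *ᵥ fun _ => 1))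
      + n * (1 / (n : ℝ) * ∑ i, m₀ i - μ₀) ^ 2 = n * Cb + σ ^ 2 / 2 / α := by
    rw [hCb]
    field_simp
    ring
  have hnoise : σ ^ 2 / 2 * (1 / (lam + α) + 1 / (α * n)) * n
      = σ ^ 2 / 2 / (lam + α) * n + σ ^ 2 / 2 / α := by
    field_simp
  rw [show Ct = lmax - σ ^ 2 / 2 / (lam + α) + ∑ i, m₀ i ^ 2 by rw [hCt, div_div],
    ouModeError_eq, ouModeError_eq, hy₀, show -2 * α * t = -(2 * t) * α by ring,
    show -2 * (lam + α) * t = -(2 * t) * (lam + α) by ring, div_mul_eq_mul_div, one_mul,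
    div_le_iff₀ (by positivity), add_mul, hnoise]
  have hn : (1 : ℝ) ≤ n := by exact_mod_cast (by omega : 1 ≤ n)
  have hGs := Real.exp_pos (-(2 * t) * (lam + α))
  have hm : 0 ≤ ∑ i, m₀ i ^ 2 := Finset.sum_nonneg fun i _ => sq_nonneg _
  -- the two sides now differ by `(n - 1) e^{-2(λ̲+α)t} ‖m₀‖² ≥ 0`
  nlinarith [mul_le_mul_of_nonneg_left hn (mul_nonneg hGs.le hm)]

/-- Convergence bound for the coupled regularized learning network (Theorem 2 of the paper,
deterministic core): the mean-squared error `(1/n)(trace Σ_w(t) + ‖μ_w(t) − μ₀·1‖²)` of the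
Gaussian solution of `dw = (L+αI)(μ₀·1 − w)dt + σ dB` is bounded by two exponentially decaying
transients plus a steady-state variance term. -/
theorem network_convergence_bound
    (n : ℕ) (hn : 2 ≤ n) (L S₀ : Matrix (Fin n) (Fin n) ℝ)
    (hLsym : L.IsSymm) (hLpsd : L.PosSemidef)
    (hL1 : L *ᵥ (fun _ => (1 : ℝ)) = 0)
    (hker : ∀ v : Fin n → ℝ, L *ᵥ v = 0 → ∃ c : ℝ, v = fun _ => c)
    (lam : ℝ) (hlam : 0 < lam)
    (hlam_eig : ∃ v : Fin n → ℝ, v ≠ 0 ∧ L *ᵥ v = lam • v)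
    (hlam_min : ∀ c : ℝ, (∃ v : Fin n → ℝ, v ≠ 0 ∧ L *ᵥ v = c • v) → c = 0 ∨ lam ≤ c)
    (α σ μ₀ : ℝ) (hα : 0 < α) (hσ : 0 ≤ σ) (m₀ : Fin n → ℝ)
    (hS₀sym : S₀.IsSymm) (hS₀ : S₀.PosSemidef)
    (lmax : ℝ) (hlmax_eig : ∃ v : Fin n → ℝ, v ≠ 0 ∧ S₀ *ᵥ v = lmax • v)
    (hlmax : ∀ (c : ℝ) (v : Fin n → ℝ), v ≠ 0 → S₀ *ᵥ v = c • v → c ≤ lmax)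
    (μw : ℝ → Fin n → ℝ) (Sw : ℝ → Matrix (Fin n) (Fin n) ℝ)
    (hμw : ∀ t : ℝ, μw t = NormedSpace.exp ((-t) • (L + α • 1)) *ᵥ m₀
        + (1 - NormedSpace.exp ((-t) • (L + α • 1))) *ᵥ (fun _ => μ₀))
    (hSw : ∀ t : ℝ, Sw t
        = NormedSpace.exp ((-t) • (L + α • 1)) * S₀ * NormedSpace.exp ((-t) • (L + α • 1))
          + (σ ^ 2 / 2) • ((L + α • 1)⁻¹
              * (1 - NormedSpace.exp ((-(2 * t)) • (L + α • 1)))))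
    (Ct Cb : ℝ)
    (hCt : Ct = lmax - σ ^ 2 / (2 * (lam + α)) + ∑ i, (m₀ i) ^ 2)
    (hCb : Cb = (1 / (n : ℝ) ^ 2) * ((fun _ => (1 : ℝ)) ⬝ᵥ (S₀ *ᵥ fun _ => (1 : ℝ)))
        - σ ^ 2 / (2 * α * n) + ((1 / (n : ℝ)) * (∑ i, m₀ i) - μ₀) ^ 2) :
    ∀ t : ℝ, 0 ≤ t →
      (1 / (n : ℝ)) * ((Sw t).trace + ∑ i, (μw t i - μ₀) ^ 2)
        ≤ Ct * Real.exp (-2 * (lam + α) * t) + Cb * Real.exp (-2 * α * t)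
          + σ ^ 2 / 2 * (1 / (lam + α) + 1 / (α * n)) :=
  network_convergence_bound_general n hn L S₀ hLpsd hL1 hker lam hlam hlam_min α σ μ₀ hα m₀ hS₀ lmax
    hlmax μw Sw hμw hSw Ct Cb hCt hCb
end

section
/- Let N ≥ 1, let Q be a symmetric positive-definite N×N real matrix, and let S be a symmetric positive-semidefinite N×N real matrix. Then the matrix-valued function s ↦ exp(−Qs)·S·exp(−Qs) is integrable on [0, ∞), the matrix C := ∫₀^∞ exp(−Qs)·S·exp(−Qs) ds satisfies the Lyapunov equation Q·C + C·Q = S, and 2·trace(C) ≤ λ_max(S)·trace(Q^{-1}). -/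
/-!
Diagonalise `Q = U D Uᵀ` with `D = diag d`, `d > 0`, and write `S = U M Uᵀ`. Then
`exp(-Qs) S exp(-Qs) = U (M k l * exp(-(d k + d l) s)) Uᵀ`, so the integral reduces to scalar
exponential integrals: `C = U T Uᵀ` with `T k l = M k l / (d k + d l)`, which solves
`D T + T D = M`. Finally `trace C = ∑ M k k / (2 d k)`, and each `M k k = u_kᵀ S u_k` for a unit
vector `u_k`, hence is at most `λ_max(S)`.
-/

open Matrix MeasureTheory Set Unitary

theorem integrableOn_exp_neg_mul_Ici {a : ℝ} (ha : 0 < a) :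
    IntegrableOn (fun s => Real.exp (-a * s)) (Ici 0) := by
  rw [integrableOn_Ici_iff_integrableOn_Ioi]
  exact integrableOn_exp_mul_Ioi (neg_neg_of_pos ha) 0

theorem integral_exp_neg_mul_Ici {a : ℝ} (ha : 0 < a) :
    ∫ s in Ici 0, Real.exp (-a * s) = a⁻¹ := by
  rw [integral_Ici_eq_integral_Ioi, integral_exp_mul_Ioi (neg_neg_of_pos ha)]
  simp

namespace Matrix

section EntrywiseIntegral

variable {α m n p q : Type*} [Fintype n] [Fintype p] [MeasurableSpace α] {μ : Measure α}
  {A : α → n → p → ℝ}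

theorem integrable_mul_mul_apply (hA : ∀ k l, Integrable (fun x => A x k l) μ)
    (P : Matrix m n ℝ) (R : Matrix p q ℝ) (i : m) (j : q) :
    Integrable (fun x => (P * of (A x) * R) i j) μ := by
  simp only [mul_apply, Finset.sum_mul]
  exact integrable_finsetSum _ fun l _ => integrable_finsetSum _ fun k _ =>
    ((hA k l).const_mul _).mul_const _

theorem integral_mul_mul_apply (hA : ∀ k l, Integrable (fun x => A x k l) μ)
    (P : Matrix m n ℝ) (R : Matrix p q ℝ) (i : m) (j : q) :
    ∫ x, (P * of (A x) * R) i j ∂μ = (P * of (fun k l => ∫ x, A x k l ∂μ) * R) i j := by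
  have hterm : ∀ k l, Integrable (fun x => P i k * A x k l * R l j) μ := fun k l =>
    ((hA k l).const_mul _).mul_const _
  simp only [mul_apply, Finset.sum_mul, of_apply]
  rw [integral_finsetSum _ fun l _ => integrable_finsetSum _ fun k _ => hterm k l]
  refine Finset.sum_congr rfl fun l _ => ?_
  rw [integral_finsetSum _ fun k _ => hterm k l]
  refine Finset.sum_congr rfl fun k _ => ?_
  rw [integral_mul_const, integral_const_mul]

end EntrywiseIntegral

section Lyapunov

variable {K n : Type*} [Field K] [Fintype n]

def lyapunovSolution (d : n → K) (M : Matrix n n K) : Matrix n n K :=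
  of fun k l => M k l / (d k + d l)

theorem diagonal_mul_add_mul_diagonal_lyapunovSolution [DecidableEq n] {d : n → K}
    (hd : ∀ k l, d k + d l ≠ 0) (M : Matrix n n K) :
    diagonal d * lyapunovSolution d M + lyapunovSolution d M * diagonal d = M := by
  ext k l
  simp only [add_apply, diagonal_mul, mul_diagonal, lyapunovSolution, of_apply]
  field_simp [hd k l]

theorem trace_lyapunovSolution (d : n → K) (M : Matrix n n K) :
    trace (lyapunovSolution d M) = ∑ k, M k k / (2 * d k) := by
  simp only [trace, diag_apply, lyapunovSolution, of_apply, two_mul]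

end Lyapunov

section UnitaryConjugation

variable {R n : Type*} [Fintype n] [DecidableEq n]

theorem trace_conjStarAlgAut [CommRing R] [StarRing R] (U : unitaryGroup n R) (X : Matrix n n R) :
    trace (conjStarAlgAut R _ U X) = trace X := by
  rw [conjStarAlgAut_apply, trace_mul_cycle, Unitary.coe_star_mul_self, one_mul]

theorem inv_conjStarAlgAut_diagonal [Field R] [StarRing R] (U : unitaryGroup n R) {d : n → R}
    (hd : ∀ k, d k ≠ 0) :
    (conjStarAlgAut R _ U (diagonal d))⁻¹ = conjStarAlgAut R _ U (diagonal d⁻¹) := by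
  refine inv_eq_right_inv ?_
  rw [← map_mul, diagonal_mul_diagonal]
  simp [mul_inv_cancel₀ (hd _)]

theorem exp_smul_conjStarAlgAut_diagonal (U : unitaryGroup n ℝ) (d : n → ℝ) (t : ℝ) :
    NormedSpace.exp (t • conjStarAlgAut ℝ _ U (diagonal d)) =
      conjStarAlgAut ℝ _ U (diagonal fun k => Real.exp (t * d k)) := by
  have hU : (U : Matrix n n ℝ)⁻¹ = star (U : Matrix n n ℝ) :=
    inv_eq_left_inv (Unitary.coe_star_mul_self U)
  rw [← map_smul, ← diagonal_smul, conjStarAlgAut_apply, conjStarAlgAut_apply, ← hU,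
    exp_conj _ _ (Unitary.isUnit_coe ..), exp_diagonal, Pi.exp_def, Real.exp_eq_exp_ℝ]
  rfl

end UnitaryConjugation

section Rayleigh

variable {n : Type*} [Fintype n] [DecidableEq n]

theorem IsHermitian.eigenvalues_le_of_forall_eigenvalue_le {A : Matrix n n ℝ}
    (hA : A.IsHermitian) {c : ℝ} (hc : ∀ (μ : ℝ) (v : n → ℝ), v ≠ 0 → A *ᵥ v = μ • v → μ ≤ c)
    (i : n) : hA.eigenvalues i ≤ c := by
  refine hc _ (hA.eigenvectorBasis i) ?_ (by simpa using hA.mulVec_eigenvectorBasis i)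
  exact fun h => hA.eigenvectorBasis.orthonormal.ne_zero i (WithLp.ofLp_injective 2 h)

open scoped ComplexOrder MatrixOrder in
theorem IsHermitian.posSemidef_smul_one_sub {𝕜 : Type*} [RCLike 𝕜] {A : Matrix n n 𝕜}
    (hA : A.IsHermitian) {c : ℝ} (hc : ∀ i, hA.eigenvalues i ≤ c) :
    (c • 1 - A).PosSemidef := by
  have hle : A ≤ algebraMap ℝ _ c := le_algebraMap_of_spectrum_le (by
    rw [hA.spectrum_real_eq_range_eigenvalues]
    rintro _ ⟨i, rfl⟩
    exact hc i) hA.isSelfAdjoint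
  rwa [Matrix.le_iff, Algebra.algebraMap_eq_smul_one] at hle

theorem PosSemidef.diag_conjStarAlgAut_symm_le {A : Matrix n n ℝ} {c : ℝ}
    (h : (c • 1 - A).PosSemidef) (U : unitaryGroup n ℝ) (k : n) :
    (conjStarAlgAut ℝ _ U).symm A k k ≤ c := by
  have hdiag := (h.conjTranspose_mul_mul_same (U : Matrix n n ℝ)).diag_nonneg (i := k)
  have hconj : (U : Matrix n n ℝ)ᴴ * (c • 1 - A) * U =
      c • 1 - star (U : Matrix n n ℝ) * A * U := by
    rw [mul_sub, sub_mul, ← star_eq_conjTranspose, mul_smul_comm, mul_one, smul_mul_assoc,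
      Unitary.coe_star_mul_self]
  rw [hconj, sub_apply, smul_apply, one_apply_eq, smul_eq_mul, mul_one, sub_nonneg] at hdiag
  rwa [conjStarAlgAut_symm_apply]

end Rayleigh

section StationaryCovariance

variable {n : Type*} [Fintype n] [DecidableEq n] (U : unitaryGroup n ℝ) {d : n → ℝ}
  (M : Matrix n n ℝ)

noncomputable def ouIntegrand (Q S : Matrix n n ℝ) (s : ℝ) : Matrix n n ℝ :=
  NormedSpace.exp ((-s) • Q) * S * NormedSpace.exp ((-s) • Q)

theorem ouIntegrand_conjStarAlgAut (s : ℝ) :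
    ouIntegrand (conjStarAlgAut ℝ _ U (diagonal d)) (conjStarAlgAut ℝ _ U M) s =
      U * of (fun k l => M k l * Real.exp (-(d k + d l) * s)) * star U := by
  rw [ouIntegrand, exp_smul_conjStarAlgAut_diagonal, ← map_mul, ← map_mul, conjStarAlgAut_apply]
  congr 2
  ext k l
  simp only [diagonal_mul, mul_diagonal, of_apply]
  rw [mul_right_comm, ← Real.exp_add]
  ring_nf

omit [Fintype n] [DecidableEq n] in
variable {M} in
theorem integrableOn_const_mul_exp_neg_add_mul_Ici (hd : ∀ k, 0 < d k) (k l : n) :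
    IntegrableOn (fun s => M k l * Real.exp (-(d k + d l) * s)) (Ici 0) :=
  (integrableOn_exp_neg_mul_Ici (add_pos (hd k) (hd l))).const_mul _

theorem integrableOn_ouIntegrand_conjStarAlgAut_apply (hd : ∀ k, 0 < d k) (i j : n) :
    IntegrableOn
      (fun s => ouIntegrand (conjStarAlgAut ℝ _ U (diagonal d)) (conjStarAlgAut ℝ _ U M) s i j)
      (Ici 0) := by
  simp only [ouIntegrand_conjStarAlgAut]
  exact integrable_mul_mul_apply (integrableOn_const_mul_exp_neg_add_mul_Ici hd) _ _ i j

theorem integral_ouIntegrand_conjStarAlgAut_apply (hd : ∀ k, 0 < d k) (i j : n) :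
    ∫ s in Ici 0,
        ouIntegrand (conjStarAlgAut ℝ _ U (diagonal d)) (conjStarAlgAut ℝ _ U M) s i j =
      conjStarAlgAut ℝ _ U (lyapunovSolution d M) i j := by
  have hentries : (of fun k l => ∫ s in Ici 0, M k l * Real.exp (-(d k + d l) * s)) =
      lyapunovSolution d M := by
    ext k l
    rw [of_apply, integral_const_mul, integral_exp_neg_mul_Ici (add_pos (hd k) (hd l))]
    rfl
  simp only [ouIntegrand_conjStarAlgAut]
  rw [integral_mul_mul_apply (integrableOn_const_mul_exp_neg_add_mul_Ici hd), hentries,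
    conjStarAlgAut_apply, Unitary.coe_star]

omit [DecidableEq n] in
theorem two_mul_trace_lyapunovSolution_le {c : ℝ} (hd : ∀ k, 0 < d k)
    (hM : ∀ k, M k k ≤ c) :
    2 * trace (lyapunovSolution d M) ≤ c * ∑ k, (d k)⁻¹ := by
  rw [trace_lyapunovSolution, Finset.mul_sum, Finset.mul_sum]
  refine Finset.sum_le_sum fun k _ => ?_
  calc 2 * (M k k / (2 * d k)) = M k k * (d k)⁻¹ := by field_simp
    _ ≤ c * (d k)⁻¹ := mul_le_mul_of_nonneg_right (hM k) (inv_nonneg.2 (hd k).le)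

end StationaryCovariance

end Matrix

theorem ou_stationary_covariance_trace_bound_general
    (N : ℕ) (Q S : Matrix (Fin N) (Fin N) ℝ)
    (hQ : Q.PosDef) (hS : S.PosSemidef)
    (lmax : ℝ)
    (hlmax : ∀ (c : ℝ) (v : Fin N → ℝ), v ≠ 0 → S *ᵥ v = c • v → c ≤ lmax)
    (C : Matrix (Fin N) (Fin N) ℝ)
    (hC : C = Matrix.of fun i j => ∫ s in Set.Ici (0 : ℝ),
        (NormedSpace.exp ((-s) • Q) * S * NormedSpace.exp ((-s) • Q)) i j) :
    (∀ i j, IntegrableOn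
        (fun s : ℝ => (NormedSpace.exp ((-s) • Q) * S * NormedSpace.exp ((-s) • Q)) i j)
        (Set.Ici 0)) ∧
    Q * C + C * Q = S ∧
    2 * C.trace ≤ lmax * (Q⁻¹).trace := by
  set U := hQ.1.eigenvectorUnitary
  set d := hQ.1.eigenvalues
  set M := (conjStarAlgAut ℝ _ U).symm S
  have hd : ∀ k, 0 < d k := hQ.eigenvalues_pos
  have hQU : Q = conjStarAlgAut ℝ _ U (diagonal d) := by
    simpa [RCLike.ofReal_real_eq_id, -conjStarAlgAut_apply] using hQ.1.spectral_theorem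
  have hSU : S = conjStarAlgAut ℝ _ U M := (StarAlgEquiv.apply_symm_apply _ S).symm
  have hCU : C = conjStarAlgAut ℝ _ U (lyapunovSolution d M) := by
    ext i j
    rw [hC, of_apply, hQU, hSU]
    exact integral_ouIntegrand_conjStarAlgAut_apply U M hd i j
  have hM : ∀ k, M k k ≤ lmax := (hS.1.posSemidef_smul_one_sub
    (hS.1.eigenvalues_le_of_forall_eigenvalue_le hlmax)).diag_conjStarAlgAut_symm_le U
  refine ⟨fun i j => ?_, ?_, ?_⟩
  · rw [hQU, hSU]
    exact integrableOn_ouIntegrand_conjStarAlgAut_apply U M hd i j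
  · rw [hQU, hCU, ← map_mul, ← map_mul, ← map_add,
      diagonal_mul_add_mul_diagonal_lyapunovSolution (fun k l => (add_pos (hd k) (hd l)).ne'), hSU]
  · rw [hCU, hQU, inv_conjStarAlgAut_diagonal _ fun k => (hd k).ne', trace_conjStarAlgAut,
      trace_conjStarAlgAut, trace_diagonal]
    exact two_mul_trace_lyapunovSolution_le M hd hM

/-- The stationary covariance of an Ornstein–Uhlenbeck process: for `Q` symmetric positive
definite and `S` symmetric positive semidefinite, `s ↦ exp(−Qs)·S·exp(−Qs)` is integrable on
`[0,∞)`, its integral `C` solves the Lyapunov equation `QC + CQ = S`, and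
`2·trace(C) ≤ λ_max(S)·trace(Q⁻¹)`. -/
theorem ou_stationary_covariance_trace_bound
    (N : ℕ) (hN : 1 ≤ N) (Q S : Matrix (Fin N) (Fin N) ℝ)
    (hQ : Q.PosDef) (hS : S.PosSemidef)
    (lmax : ℝ) (hlmax_eig : ∃ v : Fin N → ℝ, v ≠ 0 ∧ S *ᵥ v = lmax • v)
    (hlmax : ∀ (c : ℝ) (v : Fin N → ℝ), v ≠ 0 → S *ᵥ v = c • v → c ≤ lmax)
    (C : Matrix (Fin N) (Fin N) ℝ)
    (hC : C = Matrix.of fun i j => ∫ s in Set.Ici (0 : ℝ),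
        (NormedSpace.exp ((-s) • Q) * S * NormedSpace.exp ((-s) • Q)) i j) :
    (∀ i j, IntegrableOn
        (fun s : ℝ => (NormedSpace.exp ((-s) • Q) * S * NormedSpace.exp ((-s) • Q)) i j)
        (Set.Ici 0)) ∧
    Q * C + C * Q = S ∧
    2 * C.trace ≤ lmax * (Q⁻¹).trace :=
  ou_stationary_covariance_trace_bound_general N Q S hQ hS lmax hlmax C hC
end

section
/- Let U be a p×q real matrix with trivial kernel (full column rank, so UᵀU is positive definite), and let U_h be a q×r real matrix with trivial kernel (full column rank). Then the symmetric (q+r)×(q+r) block matrix [[UᵀU + I_q, −U_h], [−U_hᵀ, U_hᵀU_h]] is positive definite. -/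
open Matrix

/-! The block matrix is a Gram matrix: writing `x = (a, b)`, its quadratic form is
`‖U a‖² + ‖a - U_h b‖²`, i.e. it equals `Kᵀ K` for the stacked matrix `K = [[U, 0], [I, -U_h]]`.
Since `K (a, b) = (U a, a - U_h b)` vanishes only when `a = 0` (by injectivity of `U`) and then
`b = 0` (by injectivity of `U_h`), `K` is injective and `Kᵀ K` is positive definite. -/

namespace Matrix

variable {R l m n : Type*} [Fintype m] [DecidableEq m]

theorem fromBlocks_transpose_mul_self_zero_one [Fintype l] [Ring R]
    (U : Matrix l m R) (Uh : Matrix m n R) :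
    (fromBlocks U 0 1 (-Uh))ᵀ * fromBlocks U 0 1 (-Uh) =
      fromBlocks (Uᵀ * U + 1) (-Uh) (-Uhᵀ) (Uhᵀ * Uh) := by
  simp [fromBlocks_transpose, fromBlocks_multiply]

theorem fromBlocks_zero_one_mulVec_injective [Fintype n] [Ring R]
    {U : Matrix l m R} {Uh : Matrix m n R} (hU : ∀ v, U *ᵥ v = 0 → v = 0)
    (hUh : ∀ v, Uh *ᵥ v = 0 → v = 0) :
    Function.Injective (fromBlocks U 0 1 (-Uh)).mulVec := by
  suffices ∀ x, fromBlocks U 0 1 (-Uh) *ᵥ x = 0 → x = 0 from fun x y hxy =>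
    sub_eq_zero.mp <| this _ <| by rw [mulVec_sub, hxy, sub_self]
  intro x hx
  rw [fromBlocks_mulVec] at hx
  have ha : x ∘ Sum.inl = 0 := hU _ <| by simpa using congrArg (· ∘ Sum.inl) hx
  have hb : x ∘ Sum.inr = 0 := hUh _ <| by simpa [ha, neg_mulVec] using congrArg (· ∘ Sum.inr) hx
  ext (i | i)
  exacts [congrFun ha i, congrFun hb i]

end Matrix

/-- The symmetrized negated drift of the two-layer linear predictive-coding (Rao–Ballard)
dynamics at trade-off parameter `λ = 1` is positive definite whenever the two dictionaries
`U` and `U_h` have full column rank: the block matrix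
`[[UᵀU + I, −U_h], [−U_hᵀ, U_hᵀU_h]]` is positive definite. -/
theorem rao_ballard_drift_posDef
    (p q r : ℕ) (U : Matrix (Fin p) (Fin q) ℝ) (Uh : Matrix (Fin q) (Fin r) ℝ)
    (hU : ∀ v : Fin q → ℝ, U *ᵥ v = 0 → v = 0)
    (hUh : ∀ v : Fin r → ℝ, Uh *ᵥ v = 0 → v = 0) :
    (Matrix.fromBlocks (Uᵀ * U + 1) (-Uh) (-Uhᵀ) (Uhᵀ * Uh)).PosDef := by
  rw [← fromBlocks_transpose_mul_self_zero_one, ← conjTranspose_eq_transpose_of_trivial]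
  exact .conjTranspose_mul_self _ (fromBlocks_zero_one_mulVec_injective hU hUh)
end

section
/- Let m ≥ 1, x, y ∈ ℝ^m, w ∈ ℝ, σ_N > 0, σ_Z > 0 and η > 0. Let L_z be a symmetric positive-semidefinite m×m real matrix, let Z be a centered multivariate Gaussian random vector on ℝ^m with covariance σ_Z²·(L_z + ηI)^{-1}, and let N be a real-valued centered Gaussian random variable with variance σ_N², independent of Z. Then E[ N²·(x + Z)ᵀ( (x + Z)·(2w + N) − 2y ) ] = 2σ_N²·( (‖x‖² + σ_Z²·trace((L_z + ηI)^{-1}))·w − ⟨x, y⟩ ). -/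
open Matrix MeasureTheory ProbabilityTheory

/-- `μ` is a centered multivariate Gaussian measure on `ℝ^m` with covariance matrix `S`. -/
def IsCenteredGaussianVec {m : ℕ} (μ : Measure (Fin m → ℝ))
    (S : Matrix (Fin m) (Fin m) ℝ) : Prop :=
  IsProbabilityMeasure μ ∧
    ∀ v : Fin m → ℝ,
      μ.map (fun z => ∑ i, v i * z i) = gaussianReal 0 (Real.toNNReal (v ⬝ᵥ (S *ᵥ v)))

/-!
The integrand is `(2wN² + N³)·‖x + Z‖² − 2N²·⟨x + Z, y⟩`, a difference of products of a function
of `N` and a function of `Z`, so under the product measure each term factors. Here `E N³ = 0` and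
`E N² = σ_N²`, while each coordinate `Z i` is `N(0, S i i)` with `S = σ_Z²(L_z + ηI)⁻¹`, so that
`E‖x + Z‖² = ‖x‖² + trace S` and `E⟨x + Z, y⟩ = ⟨x, y⟩`. Positive semidefiniteness of `S` is what
makes `S i i`, rather than its truncation `(S i i).toNNReal`, the variance of `Z i`.
-/

open scoped NNReal

namespace ProbabilityTheory

lemma integrable_pow_gaussianReal (μ : ℝ) (v : ℝ≥0) (n : ℕ) :
    Integrable (fun x : ℝ ↦ x ^ n) (gaussianReal μ v) :=
  integrable_pow_of_mem_interior_integrableExpSet (X := id)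
    (by simp [integrableExpSet_id_gaussianReal]) n

lemma integral_sq_gaussianReal_zero (v : ℝ≥0) :
    ∫ x, x ^ 2 ∂gaussianReal 0 v = v := by
  rw [← variance_of_integral_eq_zero aemeasurable_id' integral_id_gaussianReal,
    variance_fun_id_gaussianReal]

lemma integral_odd_pow_gaussianReal_zero (v : ℝ≥0) {n : ℕ} (hn : Odd n) :
    ∫ x, x ^ n ∂gaussianReal 0 v = 0 := by
  have h : ∫ x, x ^ n ∂gaussianReal 0 v = ∫ x, (-x) ^ n ∂gaussianReal 0 v := by
    conv_lhs => rw [← neg_zero, ← gaussianReal_map_neg]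
    exact integral_map (by fun_prop) (by fun_prop)
  simp only [hn.neg_pow, integral_neg] at h
  linarith

end ProbabilityTheory

namespace IsCenteredGaussianVec

variable {m : ℕ} {μ : Measure (Fin m → ℝ)} {S : Matrix (Fin m) (Fin m) ℝ}

lemma map_eval (hμ : IsCenteredGaussianVec μ S) (i : Fin m) :
    μ.map (fun z ↦ z i) = gaussianReal 0 (S i i).toNNReal := by
  simpa [Pi.single_apply] using hμ.2 (Pi.single i 1)

lemma integral_eval_pow (hμ : IsCenteredGaussianVec μ S) (i : Fin m) (n : ℕ) :
    ∫ z, z i ^ n ∂μ = ∫ x, x ^ n ∂gaussianReal 0 (S i i).toNNReal := by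
  rw [← hμ.map_eval i, integral_map (measurable_pi_apply i).aemeasurable (by fun_prop)]

lemma integrable_eval_pow (hμ : IsCenteredGaussianVec μ S) (i : Fin m) (n : ℕ) :
    Integrable (fun z ↦ z i ^ n) μ := by
  have h := integrable_pow_gaussianReal 0 (S i i).toNNReal n
  rw [← hμ.map_eval i] at h
  exact h.comp_measurable (by fun_prop)

lemma integrable_eval (hμ : IsCenteredGaussianVec μ S) (i : Fin m) :
    Integrable (fun z ↦ z i) μ := by
  simpa using hμ.integrable_eval_pow i 1

lemma integral_eval (hμ : IsCenteredGaussianVec μ S) (i : Fin m) :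
    ∫ z, z i ∂μ = 0 := by
  simpa using hμ.integral_eval_pow i 1

lemma integral_eval_sq (hμ : IsCenteredGaussianVec μ S) {i : Fin m} (hi : 0 ≤ S i i) :
    ∫ z, z i ^ 2 ∂μ = S i i := by
  rw [hμ.integral_eval_pow, integral_sq_gaussianReal_zero, Real.coe_toNNReal _ hi]

lemma integrable_const_add_eval_sq (hμ : IsCenteredGaussianVec μ S) (i : Fin m) (a : ℝ) :
    Integrable (fun z ↦ (a + z i) ^ 2) μ := by
  have := hμ.1
  simp_rw [add_sq]
  exact ((integrable_const _).add ((hμ.integrable_eval i).const_mul (2 * a))).add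
    (hμ.integrable_eval_pow i 2)

lemma integral_const_add_eval_sq (hμ : IsCenteredGaussianVec μ S) {i : Fin m} (hi : 0 ≤ S i i)
    (a : ℝ) : ∫ z, (a + z i) ^ 2 ∂μ = a ^ 2 + S i i := by
  have := hμ.1
  have hlin : Integrable (fun z ↦ 2 * a * z i) μ := (hμ.integrable_eval i).const_mul (2 * a)
  have haff : Integrable (fun z ↦ a ^ 2 + 2 * a * z i) μ := (integrable_const _).add hlin
  simp_rw [add_sq]
  rw [integral_add haff (hμ.integrable_eval_pow i 2), integral_add (integrable_const _) hlin,
    integral_const_mul, hμ.integral_eval, hμ.integral_eval_sq hi]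
  simp

lemma integrable_const_add_eval_mul (hμ : IsCenteredGaussianVec μ S) (i : Fin m) (a b : ℝ) :
    Integrable (fun z ↦ (a + z i) * b) μ := by
  have := hμ.1
  exact ((integrable_const a).add (hμ.integrable_eval i)).mul_const b

lemma integral_const_add_eval_mul (hμ : IsCenteredGaussianVec μ S) (i : Fin m) (a b : ℝ) :
    ∫ z, (a + z i) * b ∂μ = a * b := by
  have := hμ.1
  rw [integral_mul_const, integral_add (integrable_const a) (hμ.integrable_eval i),
    hμ.integral_eval]
  simp

lemma integrable_sum_add_sq (hμ : IsCenteredGaussianVec μ S) (x : Fin m → ℝ) :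
    Integrable (fun z ↦ ∑ i, (x i + z i) ^ 2) μ :=
  integrable_finsetSum _ fun i _ ↦ hμ.integrable_const_add_eval_sq i (x i)

lemma integrable_sum_add_mul (hμ : IsCenteredGaussianVec μ S) (x y : Fin m → ℝ) :
    Integrable (fun z ↦ ∑ i, (x i + z i) * y i) μ :=
  integrable_finsetSum _ fun i _ ↦ hμ.integrable_const_add_eval_mul i (x i) (y i)

lemma integral_sum_add_sq (hμ : IsCenteredGaussianVec μ S) (hS : S.PosSemidef)
    (x : Fin m → ℝ) : ∫ z, ∑ i, (x i + z i) ^ 2 ∂μ = ∑ i, x i ^ 2 + S.trace := by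
  rw [integral_finsetSum _ fun i _ ↦ hμ.integrable_const_add_eval_sq i (x i)]
  simp_rw [hμ.integral_const_add_eval_sq hS.diag_nonneg]
  rw [Finset.sum_add_distrib, trace]
  rfl

lemma integral_sum_add_mul (hμ : IsCenteredGaussianVec μ S) (x y : Fin m → ℝ) :
    ∫ z, ∑ i, (x i + z i) * y i ∂μ = ∑ i, x i * y i := by
  rw [integral_finsetSum _ fun i _ ↦ hμ.integrable_const_add_eval_mul i (x i) (y i)]
  simp_rw [hμ.integral_const_add_eval_mul]

end IsCenteredGaussianVec

namespace MeasureTheory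

lemma integral_prod_mul_sub_mul {α β : Type*} [MeasurableSpace α] [MeasurableSpace β]
    {ν : Measure α} {μ : Measure β} [SFinite ν] [SFinite μ] {f h : α → ℝ} {g k : β → ℝ}
    (hf : Integrable f ν) (hg : Integrable g μ) (hh : Integrable h ν) (hk : Integrable k μ) :
    ∫ p, f p.1 * g p.2 - h p.1 * k p.2 ∂ν.prod μ = (∫ a, f a ∂ν) * (∫ b, g b ∂μ)
      - (∫ a, h a ∂ν) * (∫ b, k b ∂μ) := by
  rw [integral_sub (hf.mul_prod hg) (hh.mul_prod hk), integral_prod_mul, integral_prod_mul]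

end MeasureTheory

theorem psgd_regression_averaged_drift_general
    (m : ℕ) (x y : Fin m → ℝ) (w σN σZ η : ℝ)
    (hη : 0 < η)
    (Lz : Matrix (Fin m) (Fin m) ℝ) (hLz : Lz.PosSemidef)
    (μZ : Measure (Fin m → ℝ))
    (hG : IsCenteredGaussianVec μZ (σZ ^ 2 • (Lz + η • 1)⁻¹)) :
    (∫ p : ℝ × (Fin m → ℝ),
        p.1 ^ 2 * (∑ i, (x i + p.2 i) * ((x i + p.2 i) * (2 * w + p.1) - 2 * y i))
        ∂((gaussianReal 0 (Real.toNNReal (σN ^ 2))).prod μZ))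
      = 2 * σN ^ 2 * (((∑ i, x i ^ 2) + σZ ^ 2 * ((Lz + η • 1)⁻¹).trace) * w
          - ∑ i, x i * y i) := by
  have : IsProbabilityMeasure μZ := hG.1
  have hS : (σZ ^ 2 • (Lz + η • 1)⁻¹).PosSemidef :=
    (hLz.add (PosSemidef.one.smul hη.le)).inv.smul (sq_nonneg σZ)
  set ν := gaussianReal 0 (σN ^ 2).toNNReal
  have hN2 : ∫ a, a ^ 2 ∂ν = σN ^ 2 := by
    rw [integral_sq_gaussianReal_zero, Real.coe_toNNReal _ (sq_nonneg σN)]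
  have hN3 : ∫ a, a ^ 3 ∂ν = 0 := integral_odd_pow_gaussianReal_zero _ (by decide)
  have hquad : Integrable (fun a ↦ 2 * w * a ^ 2) ν :=
    (integrable_pow_gaussianReal 0 _ 2).const_mul _
  have hcube : Integrable (fun a : ℝ ↦ a ^ 3) ν := integrable_pow_gaussianReal 0 _ 3
  have hsplit : ∀ (a : ℝ) (z : Fin m → ℝ),
      a ^ 2 * ∑ i, (x i + z i) * ((x i + z i) * (2 * w + a) - 2 * y i)
        = (2 * w * a ^ 2 + a ^ 3) * ∑ i, (x i + z i) ^ 2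
          - 2 * a ^ 2 * ∑ i, (x i + z i) * y i := by
    intro a z
    simp only [Finset.mul_sum, ← Finset.sum_sub_distrib]
    exact Finset.sum_congr rfl fun i _ ↦ by ring
  simp_rw [hsplit]
  rw [integral_prod_mul_sub_mul (hquad.fun_add hcube) (hG.integrable_sum_add_sq x)
      ((integrable_pow_gaussianReal 0 _ 2).const_mul 2) (hG.integrable_sum_add_mul x y),
    integral_add hquad hcube, integral_const_mul, integral_const_mul, hN2, hN3,
    hG.integral_sum_add_sq hS, hG.integral_sum_add_mul, trace_smul, smul_eq_mul]
  ring

/-- Homogenized drift of the coordinatewise PSGD regression dynamics: averaging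
`N²·(x+Z)ᵀ((x+Z)(2w+N) − 2y)` over the independent pair of a scalar Gaussian PSGD
perturbation `N ∼ N(0, σ_N²)` and a correlated Gaussian data-noise vector
`Z ∼ N(0, σ_Z²(L_z+ηI)⁻¹)` gives
`2σ_N²((‖x‖² + σ_Z²·trace((L_z+ηI)⁻¹))·w − ⟨x,y⟩)`. -/
theorem psgd_regression_averaged_drift
    (m : ℕ) (hm : 1 ≤ m) (x y : Fin m → ℝ) (w σN σZ η : ℝ)
    (hσN : 0 < σN) (hσZ : 0 < σZ) (hη : 0 < η)
    (Lz : Matrix (Fin m) (Fin m) ℝ) (hLzsym : Lz.IsSymm) (hLz : Lz.PosSemidef)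
    (μZ : Measure (Fin m → ℝ))
    (hG : IsCenteredGaussianVec μZ (σZ ^ 2 • (Lz + η • 1)⁻¹)) :
    (∫ p : ℝ × (Fin m → ℝ),
        p.1 ^ 2 * (∑ i, (x i + p.2 i) * ((x i + p.2 i) * (2 * w + p.1) - 2 * y i))
        ∂((gaussianReal 0 (Real.toNNReal (σN ^ 2))).prod μZ))
      = 2 * σN ^ 2 * (((∑ i, x i ^ 2) + σZ ^ 2 * ((Lz + η • 1)⁻¹).trace) * w
          - ∑ i, x i * y i) :=
  psgd_regression_averaged_drift_general m x y w σN σZ η hη Lz hLz μZ hG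
end

section
/- Let a ∈ ℝ, σ_N > 0 and σ_w > 0. Define Φ : ℝ² → ℝ by Φ(y, z) = z − a·σ_N²·y − (a/6)·y³, and define the differential operator L₀ acting on smooth functions of (y, z) by (L₀φ)(y,z) = −y·∂φ/∂y − z·∂φ/∂z + σ_N²·∂²φ/∂y² + σ_w²·∂²φ/∂z². Then: (i) for all (y, z) ∈ ℝ², −(L₀Φ)(y, z) = z − (a/2)·y³; and (ii) ∫ Φ(y, z) dp_∞(y, z) = 0, where p_∞ is the product of the Gaussian measure on ℝ with mean 0 and variance σ_N² (in y) and the Gaussian measure on ℝ with mean 0 and variance σ_w² (in z). -/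
/-!
Part (i) is a direct computation: `Φ` is affine in `z`, so `∂²_zΦ = 0`, and the diffusion term
`σ_N² ∂²_yΦ = -aσ_N² y` cancels the linear part of the drift term `-y ∂_yΦ = aσ_N² y + (a/2) y³`.
Part (ii) is symmetry: `Φ` is odd and `p_∞` is invariant under `p ↦ -p`.
-/

open MeasureTheory ProbabilityTheory

namespace MeasureTheory.Measure

instance prod.instIsNegInvariant {α β : Type*} [MeasurableSpace α] [MeasurableSpace β]
    [Neg α] [Neg β] [MeasurableNeg α] [MeasurableNeg β] (μ : Measure α) (ν : Measure β)
    [SFinite μ] [SFinite ν] [μ.IsNegInvariant] [ν.IsNegInvariant] :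
    (μ.prod ν).IsNegInvariant where
  neg_eq_self := by
    change (μ.prod ν).map (Prod.map Neg.neg Neg.neg) = μ.prod ν
    rw [← map_prod_map μ ν measurable_neg measurable_neg, map_neg_eq_self, map_neg_eq_self]

end MeasureTheory.Measure

namespace ProbabilityTheory

instance instIsNegInvariantGaussianRealZero (v : NNReal) : (gaussianReal 0 v).IsNegInvariant :=
  ⟨(gaussianReal_map_neg (μ := 0)).trans (by rw [neg_zero])⟩

end ProbabilityTheory

theorem Function.Odd.integral_eq_zero {G E : Type*} [MeasurableSpace G] [AddGroup G]
    [MeasurableNeg G] [NormedAddCommGroup E] [NormedSpace ℝ E] {μ : Measure G}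
    [μ.IsNegInvariant] {f : G → E} (hf : f.Odd) : ∫ x, f x ∂μ = 0 := by
  have h : ∫ x, f x ∂μ = -∫ x, f x ∂μ :=
    calc ∫ x, f x ∂μ = ∫ x, f (-x) ∂μ := (integral_neg_eq_self f μ).symm
      _ = ∫ x, -f x ∂μ := by congr with x; exact hf x
      _ = -∫ x, f x ∂μ := integral_neg f
  have h_two_smul : (2 : ℝ) • ∫ x, f x ∂μ = 0 := by
    rw [two_smul]
    nth_rewrite 2 [h]
    exact add_neg_cancel _
  simpa using h_two_smul

theorem deriv_const_sub_mul_sub_mul_pow_three (c₀ c₁ c₃ : ℝ) :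
    deriv (fun y : ℝ => c₀ - c₁ * y - c₃ * y ^ 3) = fun y => -c₁ - 3 * c₃ * y ^ 2 := by
  funext y
  have h : HasDerivAt (fun y : ℝ => c₀ - c₁ * y - c₃ * y ^ 3) (0 - c₁ * 1 - c₃ * (3 * y ^ 2)) y :=
    ((hasDerivAt_const y c₀).sub ((hasDerivAt_id' y).const_mul c₁)).sub
      ((hasDerivAt_pow 3 y).const_mul c₃)
  rw [h.deriv]
  ring

theorem deriv_const_sub_mul_pow_two (c₀ c₂ : ℝ) :
    deriv (fun y : ℝ => c₀ - c₂ * y ^ 2) = fun y => -(2 * c₂ * y) := by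
  funext y
  have h : HasDerivAt (fun y : ℝ => c₀ - c₂ * y ^ 2) (0 - c₂ * (2 * y ^ 1)) y :=
    (hasDerivAt_const y c₀).sub ((hasDerivAt_pow 2 y).const_mul c₂)
  rw [h.deriv]
  ring

theorem poisson_cell_problem_solution_general
    (a σN σw : ℝ)
    (Φ : ℝ → ℝ → ℝ) (hΦ : ∀ y z : ℝ, Φ y z = z - a * σN ^ 2 * y - a / 6 * y ^ 3)
    (L0 : (ℝ → ℝ → ℝ) → ℝ → ℝ → ℝ)
    (hL0 : ∀ (φ : ℝ → ℝ → ℝ) (y z : ℝ), L0 φ y z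
        = -y * deriv (fun y' => φ y' z) y - z * deriv (fun z' => φ y z') z
          + σN ^ 2 * deriv (fun y' => deriv (fun y'' => φ y'' z) y') y
          + σw ^ 2 * deriv (fun z' => deriv (fun z'' => φ y z'') z') z) :
    (∀ y z : ℝ, -(L0 Φ y z) = z - a / 2 * y ^ 3) ∧
    (∫ p : ℝ × ℝ, Φ p.1 p.2
        ∂((gaussianReal 0 (Real.toNNReal (σN ^ 2))).prod
          (gaussianReal 0 (Real.toNNReal (σw ^ 2))))) = 0 := by
  obtain rfl : Φ = fun y z => z - a * σN ^ 2 * y - a / 6 * y ^ 3 := funext₂ hΦ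
  refine ⟨fun y z => ?_, Function.Odd.integral_eq_zero fun p => ?_⟩
  · have hz : deriv (fun z' : ℝ => z' - a * σN ^ 2 * y - a / 6 * y ^ 3) = fun _ => 1 := by
      funext z'
      simp
    rw [hL0, deriv_const_sub_mul_sub_mul_pow_three, deriv_const_sub_mul_pow_two, hz, deriv_const]
    ring
  · simp only [Prod.fst_neg, Prod.snd_neg]
    ring

/-- `Φ(y,z) = z − aσ_N²y − (a/6)y³` is the centered solution of the Poisson cell problem
`−L₀Φ = z − (a/2)y³` for the generator `L₀` of the two-dimensional Ornstein–Uhlenbeck process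
with stationary distribution `N(0, σ_N²) ⊗ N(0, σ_w²)`: (i) `−(L₀Φ)(y,z) = z − (a/2)y³`
pointwise, and (ii) `∫ Φ dp_∞ = 0`. -/
theorem poisson_cell_problem_solution
    (a σN σw : ℝ) (hσN : 0 < σN) (hσw : 0 < σw)
    (Φ : ℝ → ℝ → ℝ) (hΦ : ∀ y z : ℝ, Φ y z = z - a * σN ^ 2 * y - a / 6 * y ^ 3)
    (L0 : (ℝ → ℝ → ℝ) → ℝ → ℝ → ℝ)
    (hL0 : ∀ (φ : ℝ → ℝ → ℝ) (y z : ℝ), L0 φ y z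
        = -y * deriv (fun y' => φ y' z) y - z * deriv (fun z' => φ y z') z
          + σN ^ 2 * deriv (fun y' => deriv (fun y'' => φ y'' z) y') y
          + σw ^ 2 * deriv (fun z' => deriv (fun z'' => φ y z'') z') z) :
    (∀ y z : ℝ, -(L0 Φ y z) = z - a / 2 * y ^ 3) ∧
    (∫ p : ℝ × ℝ, Φ p.1 p.2
        ∂((gaussianReal 0 (Real.toNNReal (σN ^ 2))).prod
          (gaussianReal 0 (Real.toNNReal (σw ^ 2))))) = 0 :=
  poisson_cell_problem_solution_general a σN σw Φ hΦ L0 hL0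
end

section
/- Let m ≥ 1 and n ≥ 1, let x, y ∈ ℝ^m with x ≠ 0, let γ > 0, and set α := ‖x‖² + m·γ² and μ := (⟨x, y⟩/α)·1 ∈ ℝ^n. Let L be a symmetric positive-semidefinite n×n real matrix and m₀ ∈ ℝ^n. Then: (i) exp(−(L+αI)t)·m₀ + (I − exp(−(L+αI)t))·μ converges to μ as t → ∞; and (ii) each coordinate of μ equals ⟨x, y⟩/(‖x‖² + m·γ²), which is the unique global minimizer over w ∈ ℝ of the regularized objective w ↦ ‖y − w·x‖² + m·γ²·w². -/
/-!
Since `α > 0`, the matrix `L + α • 1` is positive definite; diagonalizing it by an orthonormal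
eigenbasis turns `exp (-t (L + α • 1))` into a diagonal matrix with entries `exp (-t λₖ)`,
`λₖ > 0`, so it tends to `0`, and the expected state, being continuous in this exponential,
tends to `μ`. The regularized objective equals `‖y‖² - 2 w ⟪x, y⟫ + α w²`, which exceeds its
value at `w₀ = ⟪x, y⟫ / α` by exactly `α (w - w₀)²`.
-/

open Matrix Filter
open scoped RealInnerProductSpace

namespace Matrix.IsHermitian

variable {𝕜 : Type*} [RCLike 𝕜] {n : Type*} [Fintype n] [DecidableEq n] {A : Matrix n n 𝕜}

theorem exp_smul_eq (hA : A.IsHermitian) (s : ℝ) :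
    NormedSpace.exp (s • A) = (hA.eigenvectorUnitary : Matrix n n 𝕜) *
      diagonal (fun k => (Real.exp (s * hA.eigenvalues k) : 𝕜)) *
        star (hA.eigenvectorUnitary : Matrix n n 𝕜) := by
  set U := (hA.eigenvectorUnitary : Matrix n n 𝕜)
  have hU : IsUnit U := (Unitary.toUnits hA.eigenvectorUnitary).isUnit
  have hUinv : U⁻¹ = star U :=
    inv_eq_right_inv (Unitary.mul_star_self_of_mem hA.eigenvectorUnitary.2)
  have hsA : s • A = U * diagonal (fun k => ((s * hA.eigenvalues k : ℝ) : 𝕜)) * U⁻¹ := by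
    conv_lhs => rw [hA.spectral_theorem, Unitary.conjStarAlgAut_apply]
    rw [hUinv, ← Matrix.smul_mul, ← Matrix.mul_smul, ← diagonal_smul]
    congr 3
    ext k
    simp [RCLike.real_smul_eq_coe_mul]
  rw [hsA, exp_conj U _ hU, exp_diagonal, hUinv]
  congr 3
  ext k
  rw [Pi.exp_def, Real.exp_eq_exp_ℝ, ← RCLike.algebraMap_eq_ofReal]
  exact (NormedSpace.algebraMap_exp_comm _).symm

end Matrix.IsHermitian

open scoped ComplexOrder in
theorem Matrix.PosDef.tendsto_exp_neg_smul_atTop {𝕜 : Type*} [RCLike 𝕜] {n : Type*}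
    [Fintype n] [DecidableEq n] {A : Matrix n n 𝕜} (hA : A.PosDef) :
    Tendsto (fun t : ℝ => NormedSpace.exp ((-t) • A)) atTop (nhds 0) := by
  have hdecay (k : n) :
      Tendsto (fun t : ℝ => (Real.exp (-t * hA.1.eigenvalues k) : 𝕜)) atTop (nhds 0) := by
    have h := Real.tendsto_exp_neg_atTop_nhds_zero.comp
      (tendsto_id.atTop_mul_const (hA.eigenvalues_pos k))
    simpa only [Function.comp_def, id, neg_mul, RCLike.ofReal_zero] using
      (RCLike.continuous_ofReal.tendsto 0).comp h
  have hdiag : Tendsto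
      (fun t : ℝ => diagonal fun k => (Real.exp (-t * hA.1.eigenvalues k) : 𝕜)) atTop (nhds 0) :=
    (continuous_id.matrix_diagonal.tendsto' 0 0 diagonal_zero).comp (tendsto_pi_nhds.mpr hdecay)
  set U := (hA.1.eigenvectorUnitary : Matrix n n 𝕜)
  have hconj : Continuous fun D : Matrix n n 𝕜 => U * D * star U :=
    (continuous_const.matrix_mul continuous_id).matrix_mul continuous_const
  exact ((hconj.tendsto' 0 0 (by simp)).comp hdiag).congr fun t => (hA.1.exp_smul_eq (-t)).symm

theorem Matrix.tendsto_mulVec_add_one_sub_mulVec {R : Type*} [Ring R] [TopologicalSpace R]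
    [IsTopologicalRing R] {n : Type*} [Fintype n] [DecidableEq n] {ι : Type*} {l : Filter ι}
    {E : ι → Matrix n n R} (hE : Tendsto E l (nhds 0)) (u v : n → R) :
    Tendsto (fun t => E t *ᵥ u + (1 - E t) *ᵥ v) l (nhds v) := by
  have hcont : Continuous fun M : Matrix n n R => M *ᵥ u + (1 - M) *ᵥ v :=
    (continuous_id.matrix_mulVec continuous_const).add
      ((continuous_const.sub continuous_id).matrix_mulVec continuous_const)
  simpa [Function.comp_def] using (hcont.tendsto 0).comp hE

section Tikhonov

variable {F : Type*} [NormedAddCommGroup F] [InnerProductSpace ℝ F]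

theorem norm_sub_smul_sq_add_mul_sq (x y : F) (c w : ℝ) :
    ‖y - w • x‖ ^ 2 + c * w ^ 2 = ‖y‖ ^ 2 - 2 * w * ⟪x, y⟫ + (‖x‖ ^ 2 + c) * w ^ 2 := by
  rw [norm_sub_sq_real, real_inner_smul_right, real_inner_comm, norm_smul, mul_pow,
    Real.norm_eq_abs, sq_abs]
  ring

theorem norm_sub_smul_sq_add_mul_sq_lt {x y : F} {c : ℝ} (hc : 0 < ‖x‖ ^ 2 + c) {w : ℝ}
    (hw : w ≠ ⟪x, y⟫ / (‖x‖ ^ 2 + c)) :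
    ‖y - (⟪x, y⟫ / (‖x‖ ^ 2 + c)) • x‖ ^ 2 + c * (⟪x, y⟫ / (‖x‖ ^ 2 + c)) ^ 2
      < ‖y - w • x‖ ^ 2 + c * w ^ 2 := by
  set w₀ := ⟪x, y⟫ / (‖x‖ ^ 2 + c)
  have hinner : ⟪x, y⟫ = (‖x‖ ^ 2 + c) * w₀ := by
    simp only [w₀]
    field_simp
  have hgap : 0 < (‖x‖ ^ 2 + c) * (w - w₀) ^ 2 := by
    have := sub_ne_zero.mpr hw
    positivity
  rw [norm_sub_smul_sq_add_mul_sq, norm_sub_smul_sq_add_mul_sq, hinner]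
  linarith [hgap]

end Tikhonov

theorem network_mean_converges_to_regularized_solution_general
    (m n : ℕ)
    (x y : EuclideanSpace ℝ (Fin m)) (hx : x ≠ 0) (γ : ℝ)
    (α : ℝ) (hα : α = ‖x‖ ^ 2 + m * γ ^ 2)
    (μ : Fin n → ℝ) (hμ : μ = fun _ => ⟪x, y⟫ / α)
    (L : Matrix (Fin n) (Fin n) ℝ) (hL : L.PosSemidef)
    (m₀ : Fin n → ℝ) :
    Tendsto (fun t : ℝ => NormedSpace.exp ((-t) • (L + α • 1)) *ᵥ m₀
        + (1 - NormedSpace.exp ((-t) • (L + α • 1))) *ᵥ μ) atTop (nhds μ) ∧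
    ∀ i, μ i = ⟪x, y⟫ / (‖x‖ ^ 2 + m * γ ^ 2) ∧
      ∀ w : ℝ, w ≠ μ i →
        ‖y - (μ i) • x‖ ^ 2 + m * γ ^ 2 * (μ i) ^ 2
          < ‖y - w • x‖ ^ 2 + m * γ ^ 2 * w ^ 2 := by
  subst hα hμ
  have hαpos : 0 < ‖x‖ ^ 2 + m * γ ^ 2 := by
    have := norm_pos_iff.mpr hx
    positivity
  have hA : (L + (‖x‖ ^ 2 + m * γ ^ 2) • (1 : Matrix (Fin n) (Fin n) ℝ)).PosDef :=
    PosDef.posSemidef_add hL (PosDef.one.smul hαpos)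
  exact ⟨tendsto_mulVec_add_one_sub_mulVec hA.tendsto_exp_neg_smul_atTop _ _,
    fun _ => ⟨rfl, fun _ => norm_sub_smul_sq_add_mul_sq_lt hαpos⟩⟩

/-- The paper's central claim: the mean of the network of `n` coupled noisy gradient-descent
learning systems, after homogenizing over observational noise of variance `γ²`, converges as
`t → ∞` (in every node) to `μ = (⟨x,y⟩/α)·1` with `α = ‖x‖² + mγ²`; each coordinate of `μ`
equals `⟨x,y⟩/(‖x‖² + mγ²)`, the unique global minimizer of the Tikhonov-regularized
objective `w ↦ ‖y − w·x‖² + mγ²·w²`. -/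
theorem network_mean_converges_to_regularized_solution
    (m n : ℕ) (hm : 1 ≤ m) (hn : 1 ≤ n)
    (x y : EuclideanSpace ℝ (Fin m)) (hx : x ≠ 0) (γ : ℝ) (hγ : 0 < γ)
    (α : ℝ) (hα : α = ‖x‖ ^ 2 + m * γ ^ 2)
    (μ : Fin n → ℝ) (hμ : μ = fun _ => ⟪x, y⟫ / α)
    (L : Matrix (Fin n) (Fin n) ℝ) (hLsym : L.IsSymm) (hL : L.PosSemidef)
    (m₀ : Fin n → ℝ) :
    Tendsto (fun t : ℝ => NormedSpace.exp ((-t) • (L + α • 1)) *ᵥ m₀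
        + (1 - NormedSpace.exp ((-t) • (L + α • 1))) *ᵥ μ) atTop (nhds μ) ∧
    ∀ i, μ i = ⟪x, y⟫ / (‖x‖ ^ 2 + m * γ ^ 2) ∧
      ∀ w : ℝ, w ≠ μ i →
        ‖y - (μ i) • x‖ ^ 2 + m * γ ^ 2 * (μ i) ^ 2
          < ‖y - w • x‖ ^ 2 + m * γ ^ 2 * w ^ 2 :=
  network_mean_converges_to_regularized_solution_general m n x y hx γ α hα μ hμ L hL m₀
end
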